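/- Let f(x₀,x₁,x₂) = a₀x₀ + a₁x₁ + a₂x₂ + a₅x₀x₂ + a₇x₁x₂ + x₀³ + x₁³ + x₀x₁x₂ (i.e., a₈ = 0). Then for every t, the point Q = (0:0:1:0) is the unique singular point at infinity of the projective closure of {f = t}, and if a₂ ≠ a₅a₇ it is a singularity of type A₁ (nondegenerate critical point of the local defining equation). -/

import Mathlib

open MvPolynomial

/-- Homogenization of `f = a₀x₀ + a₁x₁ + a₂x₂ + a₅x₀x₂ + a₇x₁x₂ + x₀³ + x₁³ + x₀x₁x₂`
(nodal cubic top part, `a₈ = 0`), with the fiber parameter `t` included. -/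
noncomputable def Fnodal (a0 a1 a2 a5 a7 t : ℂ) : MvPolynomial (Fin 4) ℂ :=
  C a0 * X 0 * X 3 ^ 2 + C a1 * X 1 * X 3 ^ 2 + C a2 * X 2 * X 3 ^ 2 +
    X 3 * (C a5 * X 0 * X 2 + C a7 * X 1 * X 2) +
    X 0 ^ 3 + X 1 ^ 3 + X 0 * X 1 * X 2 - C t * X 3 ^ 3

/-- Local equation of the surface at `Q = (0:0:1:0)` in the chart `x₂ = 1`,
in the variables `(x₀, x₁, x₃)`. -/
noncomputable def gnodal (a0 a1 a2 a5 a7 t : ℂ) : MvPolynomial (Fin 3) ℂ :=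
  C a0 * X 0 * X 2 ^ 2 + C a1 * X 1 * X 2 ^ 2 + C a2 * X 2 ^ 2 +
    C a5 * X 0 * X 2 + C a7 * X 1 * X 2 + X 0 ^ 3 + X 1 ^ 3 + X 0 * X 1 - C t * X 2 ^ 3


/-! On the plane at infinity `x₃ = 0` the surface `F = 0` cuts out the nodal cubic
`x₀³ + x₁³ + x₀x₁x₂`; its gradient there is `(3x₀² + x₁x₂, 3x₁² + x₀x₂, x₀x₁)`, which vanishes
only when `x₀ = x₁ = 0`, i.e. at `Q`. In the chart `x₂ = 1` the quadratic part of the local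
equation at `Q` is `x₀x₁ + a₅x₀x₃ + a₇x₁x₃ + a₂x₃²`, whose Hessian has determinant
`2(a₅a₇ - a₂)`. -/

theorem eq_zero_and_eq_zero_of_nodal_cubic_critical {K : Type*} [Field K] [CharZero K]
    {x y z : K} (hx : 3 * x ^ 2 + y * z = 0) (hy : 3 * y ^ 2 + x * z = 0) (hxy : x * y = 0) :
    x = 0 ∧ y = 0 := by
  rcases mul_eq_zero.1 hxy with rfl | rfl
  · exact ⟨rfl, pow_eq_zero_iff two_ne_zero |>.1 (by linear_combination hy / 3)⟩
  · exact ⟨pow_eq_zero_iff two_ne_zero |>.1 (by linear_combination hx / 3), rfl⟩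

section
variable (a0 a1 a2 a5 a7 t : ℂ)

theorem eval_pderiv_Fnodal (p : Fin 4 → ℂ) (i : Fin 4) :
    eval p (pderiv i (Fnodal a0 a1 a2 a5 a7 t)) =
      ![a0 * p 3 ^ 2 + a5 * p 2 * p 3 + 3 * p 0 ^ 2 + p 1 * p 2,
        a1 * p 3 ^ 2 + a7 * p 2 * p 3 + 3 * p 1 ^ 2 + p 0 * p 2,
        a2 * p 3 ^ 2 + a5 * p 0 * p 3 + a7 * p 1 * p 3 + p 0 * p 1,
        2 * (a0 * p 0 + a1 * p 1 + a2 * p 2) * p 3 + a5 * p 0 * p 2 + a7 * p 1 * p 2 -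
          3 * t * p 3 ^ 2] i := by
  fin_cases i <;> simp [Fnodal] <;> ring

theorem eval_zero_pderiv_gnodal (i : Fin 3) : eval 0 (pderiv i (gnodal a0 a1 a2 a5 a7 t)) = 0 := by
  fin_cases i <;> simp [gnodal]

theorem hessian_gnodal_at_zero :
    (Matrix.of fun i j : Fin 3 => eval 0 (pderiv i (pderiv j (gnodal a0 a1 a2 a5 a7 t)))) =
      !![0, 1, a5; 1, 0, a7; a5, a7, 2 * a2] := by
  ext i j
  fin_cases i <;> fin_cases j <;> simp [gnodal, map_ofNat, mul_comm a2]

theorem det_hessian_gnodal_at_zero :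
    (Matrix.of fun i j : Fin 3 => eval 0 (pderiv i (pderiv j (gnodal a0 a1 a2 a5 a7 t)))).det =
      2 * (a5 * a7 - a2) := by
  rw [hessian_gnodal_at_zero, Matrix.det_fin_three]
  simp only [Matrix.of_apply, Matrix.cons_val', Matrix.cons_val_zero, Matrix.cons_val_fin_one,
    Matrix.cons_val_one, Matrix.cons_val]
  ring

end

/-- With `a₈ = 0`: for every `t`, the point `Q = (0:0:1:0)` is the unique singular
point at infinity of the projective closure of `{f = t}`, and if `a₂ ≠ a₅ a₇`
it is a singularity of type `A₁` (nondegenerate critical point of the local equation). -/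
theorem nodal_Q_unique_singular_and_A1 (a0 a1 a2 a5 a7 : ℂ) :
    ∀ t : ℂ,
      (eval (fun j : Fin 4 => if j = 2 then (1 : ℂ) else 0) (Fnodal a0 a1 a2 a5 a7 t) = 0 ∧
        ∀ i : Fin 4, eval (fun j : Fin 4 => if j = 2 then (1 : ℂ) else 0)
          (pderiv i (Fnodal a0 a1 a2 a5 a7 t)) = 0) ∧
      (∀ p : Fin 4 → ℂ, p ≠ 0 → p 3 = 0 →
        eval p (Fnodal a0 a1 a2 a5 a7 t) = 0 →
        (∀ i : Fin 4, eval p (pderiv i (Fnodal a0 a1 a2 a5 a7 t)) = 0) →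
        ∃ c : ℂ, c ≠ 0 ∧ p = fun j => c * (if j = 2 then 1 else 0)) ∧
      (a2 ≠ a5 * a7 →
        (∀ i : Fin 3, eval 0 (pderiv i (gnodal a0 a1 a2 a5 a7 t)) = 0) ∧
        (Matrix.of fun i j : Fin 3 =>
          eval 0 (pderiv i (pderiv j (gnodal a0 a1 a2 a5 a7 t)))).det ≠ 0) := by
  intro t
  refine ⟨⟨by simp [Fnodal], fun i => ?_⟩, fun p hp h3 _ hD => ?_, fun ha => ?_⟩
  · rw [eval_pderiv_Fnodal]
    fin_cases i <;> simp
  · have hD' (i : Fin 4) := eval_pderiv_Fnodal a0 a1 a2 a5 a7 t p i ▸ hD i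
    obtain ⟨h0, h1⟩ := eq_zero_and_eq_zero_of_nodal_cubic_critical
      (by simpa [h3] using hD' 0) (by simpa [h3] using hD' 1) (by simpa [h3] using hD' 2)
    have hp_eq : p = fun j => p 2 * (if j = 2 then 1 else 0) := by
      funext j
      fin_cases j <;> simp [h0, h1, h3]
    refine ⟨p 2, fun h2 => hp ?_, hp_eq⟩
    rw [hp_eq, h2]
    exact funext fun _ => zero_mul _
  · refine ⟨eval_zero_pderiv_gnodal a0 a1 a2 a5 a7 t, ?_⟩
    rw [det_hessian_gnodal_at_zero]
    exact mul_ne_zero two_ne_zero (sub_ne_zero.2 (Ne.symm ha))
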